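/- A signed complete graph on n ≥ 5 vertices contains both a positive Hamiltonian cycle and a negative Hamiltonian cycle if and only if it contains at least one positive triangle and at least one negative triangle. -/
import Mathlib


/-- The sign of the Hamiltonian cycle listed by the bijection `v`. -/
def hamSign {n : ℕ} [NeZero n] (σ : Fin n → Fin n → ℤˣ)
    (v : Fin n → Fin n) : ℤˣ :=
  ∏ k : Fin n, σ (v k) (v (k + 1))

/-- The sign of the triangle on vertices `a`, `b`, `c`. -/
def triSign {n : ℕ} (σ : Fin n → Fin n → ℤˣ) (a b c : Fin n) : ℤˣ :=
  σ a b * σ b c * σ c a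

private lemma sq1 (u : ℤˣ) : u * u = 1 := by
  rcases Int.units_eq_one_or u with h | h <;> rw [h] <;> rfl

private lemma exists_perm_extend {n m : ℕ} (h : m ≤ n) (t : Fin m → Fin n)
    (ht : Function.Injective t) :
    ∃ f : Equiv.Perm (Fin n), ∀ i : Fin m, f (Fin.castLE h i) = t i := by
  induction m with
  | zero => exact ⟨1, fun i => i.elim0⟩
  | succ m ih =>
    have h' : m ≤ n := le_trans (Nat.le_succ m) h
    obtain ⟨f, hf⟩ := ih h' (t ∘ Fin.castSucc) (ht.comp (Fin.castSucc_injective m))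
    refine ⟨f * Equiv.swap (Fin.castLE h (Fin.last m)) (f.symm (t (Fin.last m))), ?_⟩
    intro i
    rcases eq_or_ne i (Fin.last m) with rfl | hi
    · simp
    · have hkey : f (Fin.castLE h i) = t i := by
        have := hf (i.castPred hi)
        have hcast : Fin.castLE h' (i.castPred hi) = Fin.castLE h i := by ext; simp
        rw [hcast] at this; rw [this]; simp
      have h1 : Fin.castLE h i ≠ Fin.castLE h (Fin.last m) :=
        fun hh => hi (Fin.castLE_injective h hh)
      have h2 : Fin.castLE h i ≠ f.symm (t (Fin.last m)) := by
        intro hh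
        apply hi; apply ht
        have := congrArg f hh
        rw [Equiv.apply_symm_apply, hkey] at this
        exact this
      simp [Equiv.Perm.mul_apply, Equiv.swap_apply_of_ne_of_ne h1 h2, hkey]

private lemma finval (n : ℕ) [NeZero n] (hn : 5 ≤ n) :
    ((0:Fin n).val = 0 ∧ (1:Fin n).val = 1 ∧ (2:Fin n).val = 2 ∧ (3:Fin n).val = 3 ∧
      (4:Fin n).val = 4) := by
  refine ⟨?_, ?_, ?_, ?_, ?_⟩ <;>
  · rw [Fin.coe_ofNat_eq_mod]
    exact Nat.mod_eq_of_lt (by omega)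

private lemma exists_perm5 {n : ℕ} [NeZero n] (hn : 5 ≤ n) (a c b d e : Fin n)
    (h1 : a ≠ c) (h2 : a ≠ b) (h3 : a ≠ d) (h4 : a ≠ e) (h5 : c ≠ b) (h6 : c ≠ d)
    (h7 : c ≠ e) (h8 : b ≠ d) (h9 : b ≠ e) (h10 : d ≠ e) :
    ∃ f : Equiv.Perm (Fin n), f 0 = a ∧ f 1 = c ∧ f 2 = b ∧ f 3 = d ∧ f 4 = e := by
  have ht : Function.Injective ![a, c, b, d, e] := by
    intro i j hij
    fin_cases i <;> fin_cases j <;> simp_all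
  obtain ⟨f, hf⟩ := exists_perm_extend hn ![a, c, b, d, e] ht
  obtain ⟨v0, v1, v2, v3, v4⟩ := finval n hn
  have key : ∀ (i : Fin 5) (x : Fin n), (x.val = i.val) → f x = ![a, c, b, d, e] i := by
    intro i x hx
    have : Fin.castLE hn i = x := by ext; simp [hx]
    rw [← this]; exact hf i
  exact ⟨f, key 0 0 (by rw [v0]; decide), key 1 1 (by rw [v1]; decide),
    key 2 2 (by rw [v2]; decide), key 3 3 (by rw [v3]; decide), key 4 4 (by rw [v4]; decide)⟩

section
variable {n : ℕ} [NeZero n] (σ : Fin n → Fin n → ℤˣ) (hsym : ∀ a b, σ a b = σ b a)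

/-- Key relation: if all Hamiltonian cycles have the same sign `s`, then for any
four distinct vertices, `σ a c * σ a d * σ c e * σ d e = 1`. -/
private lemma relA (hn : 5 ≤ n)
    (hsym : ∀ a b, σ a b = σ b a) (s : ℤˣ)
    (hconst : ∀ v : Fin n → Fin n, Function.Bijective v → hamSign σ v = s)
    (a c d e : Fin n) (hac : a ≠ c) (had : a ≠ d) (hae : a ≠ e)
    (hcd : c ≠ d) (hce : c ≠ e) (hde : d ≠ e) :
    σ a c * σ a d * σ c e * σ d e = 1 := by
  -- find a fifth vertex b
  obtain ⟨b, hb⟩ : ∃ b : Fin n, b ∉ ({a, c, d, e} : Finset (Fin n)) := by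
    by_contra h
    push_neg at h
    have hsub : (Finset.univ : Finset (Fin n)) ⊆ {a, c, d, e} := fun x _ => h x
    have := Finset.card_le_card hsub
    simp only [Finset.card_univ, Fintype.card_fin] at this
    have h4 : ({a, c, d, e} : Finset (Fin n)).card ≤ 4 :=
      calc ({a, c, d, e} : Finset (Fin n)).card
          ≤ ({c, d, e} : Finset (Fin n)).card + 1 := Finset.card_insert_le _ _
        _ ≤ (({d, e} : Finset (Fin n)).card + 1) + 1 :=
            Nat.add_le_add_right (Finset.card_insert_le _ _) 1
        _ ≤ ((({e} : Finset (Fin n)).card + 1) + 1) + 1 :=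
            Nat.add_le_add_right (Nat.add_le_add_right (Finset.card_insert_le _ _) 1) 1
        _ = 4 := by simp
    omega
  simp only [Finset.mem_insert, Finset.mem_singleton, not_or] at hb
  obtain ⟨hba, hbc, hbd, hbe⟩ := hb
  obtain ⟨f, hf0, hf1, hf2, hf3, hf4⟩ :=
    exists_perm5 hn a c b d e hac (Ne.symm hba) had hae (Ne.symm hbc) hcd hce
      hbd hbe hde
  obtain ⟨v0, v1, v2, v3, v4⟩ := finval n hn
  have hne : ∀ i j : Fin n, i.val ≠ j.val → i ≠ j := fun i j h hh => h (congrArg Fin.val hh)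
  have h01 : (0:Fin n) ≠ 1 := hne _ _ (by rw [v0, v1]; omega)
  have h02 : (0:Fin n) ≠ 2 := hne _ _ (by rw [v0, v2]; omega)
  have h03 : (0:Fin n) ≠ 3 := hne _ _ (by rw [v0, v3]; omega)
  have h12 : (1:Fin n) ≠ 2 := hne _ _ (by rw [v1, v2]; omega)
  have h13 : (1:Fin n) ≠ 3 := hne _ _ (by rw [v1, v3]; omega)
  have h23 : (2:Fin n) ≠ 3 := hne _ _ (by rw [v2, v3]; omega)
  have ha01 : (0:Fin n) + 1 = 1 := by
    apply Fin.ext; rw [Fin.val_add, v0, v1]; rw [Nat.mod_eq_of_lt (by omega)]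
  have ha12 : (1:Fin n) + 1 = 2 := by
    apply Fin.ext; rw [Fin.val_add, v1, v2]; rw [Nat.mod_eq_of_lt (by omega)]
  have ha23 : (2:Fin n) + 1 = 3 := by
    apply Fin.ext; rw [Fin.val_add, v2, v1, v3]; rw [Nat.mod_eq_of_lt (by omega)]
  have ha34 : (3:Fin n) + 1 = 4 := by
    apply Fin.ext; rw [Fin.val_add, v3, v1, v4]; rw [Nat.mod_eq_of_lt (by omega)]
  set w : Fin n → Fin n := fun k => Equiv.swap c d (f k) with hw
  have hwbij : Function.Bijective w := ((Equiv.swap c d).bijective).comp f.bijective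
  have h1 := hconst f f.bijective
  have h2 := hconst w hwbij
  set F : Fin n → ℤˣ := fun k =>
    σ (f k) (f (k + 1)) * σ (Equiv.swap c d (f k)) (Equiv.swap c d (f (k + 1))) with hF
  have hprod : (∏ k : Fin n, F k) = 1 := by
    rw [hF]
    rw [Finset.prod_mul_distrib]
    have e1 : (∏ k : Fin n, σ (f k) (f (k + 1))) = hamSign σ f := rfl
    have e2 : (∏ k : Fin n, σ (Equiv.swap c d (f k)) (Equiv.swap c d (f (k + 1))))
        = hamSign σ w := rfl
    rw [e1, e2, h1, h2, sq1]
  have hfc : ∀ k : Fin n, k ≠ 1 → f k ≠ c := fun k hk h => hk (f.injective (h.trans hf1.symm))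
  have hfd : ∀ k : Fin n, k ≠ 3 → f k ≠ d := fun k hk h => hk (f.injective (h.trans hf3.symm))
  have hvanish : ∀ k ∈ (Finset.univ : Finset (Fin n)),
      k ∉ ({0, 1, 2, 3} : Finset (Fin n)) → F k = 1 := by
    intro k _ hk
    simp only [Finset.mem_insert, Finset.mem_singleton, not_or] at hk
    obtain ⟨hk0, hk1, hk2, hk3⟩ := hk
    have e1 : f k ≠ c := hfc k hk1
    have e2 : f k ≠ d := hfd k hk3
    have e3 : f (k+1) ≠ c := hfc _ (fun h => hk0 (by
      have : k + 1 = 0 + 1 := by rw [ha01]; exact h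
      exact add_right_cancel this))
    have e4 : f (k+1) ≠ d := hfd _ (fun h => hk2 (by
      have : k + 1 = 2 + 1 := by rw [ha23]; exact h
      exact add_right_cancel this))
    rw [hF]
    simp only [Equiv.swap_apply_of_ne_of_ne e1 e2, Equiv.swap_apply_of_ne_of_ne e3 e4]
    exact sq1 _
  have hrestrict : (∏ k ∈ ({0, 1, 2, 3} : Finset (Fin n)), F k) = 1 := by
    rw [Finset.prod_subset (Finset.subset_univ _) hvanish]
    exact hprod
  have hexpand : (∏ k ∈ ({0, 1, 2, 3} : Finset (Fin n)), F k) = F 0 * (F 1 * (F 2 * F 3)) := by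
    rw [Finset.prod_insert (by simp [h01, h02, h03]),
        Finset.prod_insert (by simp [h12, h13]),
        Finset.prod_insert (by simp [h23]),
        Finset.prod_singleton]
  have hF0 : F 0 = σ a c * σ a d := by
    rw [hF]; simp only [ha01, hf0, hf1]
    rw [Equiv.swap_apply_of_ne_of_ne hac had, Equiv.swap_apply_left]
  have hF1 : F 1 = σ c b * σ d b := by
    rw [hF]; simp only [ha12, hf1, hf2]
    rw [Equiv.swap_apply_left, Equiv.swap_apply_of_ne_of_ne hbc hbd]
  have hF2 : F 2 = σ b d * σ b c := by
    rw [hF]; simp only [ha23, hf2, hf3]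
    rw [Equiv.swap_apply_of_ne_of_ne hbc hbd, Equiv.swap_apply_right]
  have hF3 : F 3 = σ d e * σ c e := by
    rw [hF]; simp only [ha34, hf3, hf4]
    rw [Equiv.swap_apply_right, Equiv.swap_apply_of_ne_of_ne (Ne.symm hce) (Ne.symm hde)]
  rw [hexpand, hF0, hF1, hF2, hF3] at hrestrict
  rw [hsym c b, hsym d b] at hrestrict
  have halg : ∀ p q u v z x : ℤˣ, p * q * (u * v * (v * u * (z * x))) = 1 →
      p * q * x * z = 1 := by decide
  exact halg _ _ _ _ _ _ hrestrict

include hsym in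
omit [NeZero n] in
private lemma tri_swap12 (a b c : Fin n) : triSign σ a b c = triSign σ b a c := by
  unfold triSign
  rw [hsym b a, hsym a c, hsym c b]
  have : ∀ p q r : ℤˣ, p * q * r = p * r * q := by decide
  exact this _ _ _

include hsym in
omit [NeZero n] in
private lemma tri_swap23 (a b c : Fin n) : triSign σ a b c = triSign σ a c b := by
  unfold triSign
  rw [hsym a c, hsym c b, hsym b a]
  have : ∀ p q r : ℤˣ, p * q * r = r * q * p := by decide
  exact this _ _ _

include hsym in
/-- If all Hamiltonian cycles have the same sign, then all triangles
have the same sign. -/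
private lemma lemB (hn : 5 ≤ n) (s : ℤˣ)
    (hconst : ∀ v : Fin n → Fin n, Function.Bijective v → hamSign σ v = s) :
    ∀ a b c a' b' c' : Fin n, a ≠ b → b ≠ c → a ≠ c → a' ≠ b' → b' ≠ c' → a' ≠ c' →
      triSign σ a b c = triSign σ a' b' c' := by
  have hE : ∀ a b x y : Fin n, a ≠ b → x ≠ a → x ≠ b → y ≠ a → y ≠ b →
      triSign σ a b x = triSign σ a b y := by
    intro a b x y hab hxa hxb hya hyb
    rcases eq_or_ne x y with rfl | hxy
    · rfl
    · have h := relA σ hn hsym s hconst x a b y hxa hxb hxy hab (Ne.symm hya) (Ne.symm hyb)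
      unfold triSign
      rw [hsym b x, hsym y a]
      have alg : ∀ p u v z w : ℤˣ, u * v * z * w = 1 → p * v * u = p * w * z := by decide
      exact alg _ _ _ _ _ h
  have helper2 : ∀ a b b' x y : Fin n, a ≠ b → a ≠ b' → b ≠ b' →
      x ≠ a → x ≠ b → y ≠ a → y ≠ b' →
      triSign σ a b x = triSign σ a b' y := by
    intro a b b' x y hab hab' hbb' hxa hxb hya hyb'
    calc triSign σ a b x = triSign σ a b b' :=
          hE a b x b' hab hxa hxb (Ne.symm hab') (Ne.symm hbb')
      _ = triSign σ a b' b := tri_swap23 σ hsym a b b'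
      _ = triSign σ a b' y := hE a b' b y hab' (Ne.symm hab) hbb' hya hyb'
  intro a b c a' b' c' hab hbc hac ha'b' hb'c' ha'c'
  by_cases h1 : a' = a
  · subst h1
    by_cases h2 : b' = b
    · subst h2
      refine hE a' b' c c' ?_ ?_ ?_ ?_ ?_ <;>
        first | assumption | (apply Ne.symm; assumption)
    · refine helper2 a' b b' c c' ?_ ?_ ?_ ?_ ?_ ?_ ?_ <;>
        first | assumption | (apply Ne.symm; assumption)
  · by_cases h2 : a' = b
    · subst h2
      rw [tri_swap12 σ hsym a a' c]
      by_cases h3 : b' = a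
      · subst h3
        refine hE a' b' c c' ?_ ?_ ?_ ?_ ?_ <;>
          first | assumption | (apply Ne.symm; assumption)
      · refine helper2 a' a b' c c' ?_ ?_ ?_ ?_ ?_ ?_ ?_ <;>
          first | assumption | (apply Ne.symm; assumption)
    · by_cases h3 : b' = a
      · subst h3
        rw [tri_swap12 σ hsym a' b' c']
        refine helper2 b' b a' c c' ?_ ?_ ?_ ?_ ?_ ?_ ?_ <;>
          first | assumption | (apply Ne.symm; assumption)
      · calc triSign σ a b c = triSign σ a a' b' := by
              refine helper2 a b a' c b' ?_ ?_ ?_ ?_ ?_ ?_ ?_ <;>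
                first | assumption | (apply Ne.symm; assumption)
          _ = triSign σ a' a b' := tri_swap12 σ hsym a a' b'
          _ = triSign σ a' b' a := tri_swap23 σ hsym a' a b'
          _ = triSign σ a' b' c' := by
              refine hE a' b' a c' ?_ ?_ ?_ ?_ ?_ <;>
                first | assumption | (apply Ne.symm; assumption)

include hsym in
/-- If all triangles have the same sign `t`, then every Hamiltonian cycle has
sign `t ^ n`. -/
private lemma lemA (hn : 5 ≤ n) (t : ℤˣ)
    (htri : ∀ a b c : Fin n, a ≠ b → b ≠ c → a ≠ c → triSign σ a b c = t)
    (v : Fin n → Fin n) (hv : Function.Bijective v) :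
    hamSign σ v = t ^ n := by
  set o : Fin n := 0 with ho
  set s : Fin n → ℤˣ := fun x => if x = o then t else σ o x with hs
  have algtri : ∀ p q r u : ℤˣ, p * q * r = u → q = u * p * r := by decide
  have algrefl : ∀ u w : ℤˣ, u = w * u * w := by decide
  have hkey : ∀ x y : Fin n, x ≠ y → σ x y = t * s x * s y := by
    intro x y hxy
    rcases eq_or_ne x o with rfl | hx
    · rcases eq_or_ne y o with rfl | hy
      · exact absurd rfl hxy
      · simp only [hs, if_pos rfl, if_neg hy]
        rw [sq1, one_mul]
    · rcases eq_or_ne y o with rfl | hy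
      · simp only [hs, if_pos rfl, if_neg hx]
        rw [hsym x o]
        exact algrefl _ _
      · have h3 := htri o x y (Ne.symm hx) hxy (Ne.symm hy)
        simp only [triSign] at h3
        simp only [hs, if_neg hx, if_neg hy]
        rw [hsym y o] at h3
        exact algtri _ _ _ _ h3
  have hne : ∀ k : Fin n, v k ≠ v (k + 1) := by
    intro k h
    have hk : k = k + 1 := hv.injective h
    have : (0 : Fin n) = 1 := by
      have := congrArg (fun z => z - k) hk
      simpa [add_comm, add_sub_cancel] using this
    have h0 : (0:Fin n).val = 0 := rfl
    have h1 : (1:Fin n).val = 1 := by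
      rw [Fin.coe_ofNat_eq_mod]; exact Nat.mod_eq_of_lt (by omega)
    rw [Fin.ext_iff, h0, h1] at this
    omega
  unfold hamSign
  rw [Finset.prod_congr rfl (fun k _ => hkey (v k) (v (k+1)) (hne k))]
  rw [Finset.prod_mul_distrib, Finset.prod_mul_distrib, Finset.prod_const]
  have hreindex : (∏ k : Fin n, s (v (k + 1))) = ∏ k : Fin n, s (v k) :=
    Fintype.prod_equiv (Equiv.addRight (1 : Fin n)) _ _ (fun x => rfl)
  rw [hreindex, mul_assoc, sq1, mul_one]
  simp [Finset.card_univ]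

end

/-- A signed complete graph contains both a positive and a negative
Hamiltonian cycle iff it contains both a positive and a negative triangle. -/
theorem pos_and_neg_ham_iff_pos_and_neg_tri (n : ℕ) (hn : 5 ≤ n) [NeZero n]
    (σ : Fin n → Fin n → ℤˣ)
    (hsym : ∀ a b, σ a b = σ b a) :
    ((∃ v : Fin n → Fin n, Function.Bijective v ∧ hamSign σ v = 1) ∧
      (∃ w : Fin n → Fin n, Function.Bijective w ∧ hamSign σ w = -1)) ↔
      ((∃ a b c : Fin n, a ≠ b ∧ b ≠ c ∧ a ≠ c ∧ triSign σ a b c = 1) ∧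
        (∃ a b c : Fin n, a ≠ b ∧ b ≠ c ∧ a ≠ c ∧ triSign σ a b c = -1)) := by
  constructor
  · rintro ⟨⟨v, hv, hv1⟩, ⟨w, hw, hw1⟩⟩
    by_contra hcon
    rw [not_and_or] at hcon
    rcases hcon with h | h
    · push_neg at h
      have htri : ∀ a b c : Fin n, a ≠ b → b ≠ c → a ≠ c → triSign σ a b c = -1 := by
        intro a b c h1 h2 h3
        rcases Int.units_eq_one_or (triSign σ a b c) with hh | hh
        · exact absurd hh (h a b c h1 h2 h3)
        · exact hh
      have e1 := lemA σ hsym hn (-1) htri v hv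
      have e2 := lemA σ hsym hn (-1) htri w hw
      rw [hv1] at e1; rw [hw1] at e2
      exact absurd (e1.trans e2.symm) (by decide)
    · push_neg at h
      have htri : ∀ a b c : Fin n, a ≠ b → b ≠ c → a ≠ c → triSign σ a b c = 1 := by
        intro a b c h1 h2 h3
        rcases Int.units_eq_one_or (triSign σ a b c) with hh | hh
        · exact hh
        · exact absurd hh (h a b c h1 h2 h3)
      have e1 := lemA σ hsym hn 1 htri v hv
      have e2 := lemA σ hsym hn 1 htri w hw
      rw [hv1] at e1; rw [hw1] at e2
      exact absurd (e1.trans e2.symm) (by decide)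
  · rintro ⟨⟨a, b, c, hab, hbc, hac, h1⟩, ⟨a', b', c', ha'b', hb'c', ha'c', h2⟩⟩
    constructor
    · by_contra hno
      push_neg at hno
      have hconst : ∀ v : Fin n → Fin n, Function.Bijective v → hamSign σ v = -1 := by
        intro v hv
        rcases Int.units_eq_one_or (hamSign σ v) with hh | hh
        · exact absurd hh (hno v hv)
        · exact hh
      have := lemB σ hsym hn (-1) hconst a b c a' b' c' hab hbc hac ha'b' hb'c' ha'c'
      rw [h1, h2] at this
      exact absurd this (by decide)
    · by_contra hno
      push_neg at hno
      have hconst : ∀ v : Fin n → Fin n, Function.Bijective v → hamSign σ v = 1 := by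
        intro v hv
        rcases Int.units_eq_one_or (hamSign σ v) with hh | hh
        · exact hh
        · exact absurd hh (hno v hv)
      have := lemB σ hsym hn 1 hconst a b c a' b' c' hab hbc hac ha'b' hb'c' ha'c'
      rw [h1, h2] at this
      exact absurd this (by decide)
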